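/- Let t_1(z) denote the root of D(t,z) = z^2 t^4 + (-2z-36)t^3 + (49-2z)t^2 - 14t + 1 in the upper half-plane of smallest modulus, for real z < -9/4. Then lim_{z→-∞} z · t_1(z)^2 = 1; in particular t_1(z) ~ i/√(-z) as z → -∞. -/

import Mathlib

/-!
The quartic is `D(t, z) = (z t² - t - 1)² - 4 t (3 t - 2)²`, so at a root
`‖z t² - 1‖ ≤ ‖t‖ + 2 √‖t‖ (3 ‖t‖ + 2)`. Read as a bound on `‖z‖ ‖t‖²`, this gives
`‖z‖ ‖t‖² ≤ 12` once `‖z‖ > 12`, so the root tends to `0`; the same bound then gives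
`z t² → 1`.
-/

open Filter Topology

def queenQuartic {R : Type*} [CommRing R] (t z : R) : R :=
  z ^ 2 * t ^ 4 + (-2 * z - 36) * t ^ 3 + (49 - 2 * z) * t ^ 2 - 14 * t + 1

theorem queenQuartic_eq_sq_sub {R : Type*} [CommRing R] (t z : R) :
    queenQuartic t z = (z * t ^ 2 - t - 1) ^ 2 - 4 * t * (3 * t - 2) ^ 2 := by
  unfold queenQuartic; ring

section Root

variable {z t : ℂ} (h : queenQuartic t z = 0)
include h

theorem norm_mul_sq_sub_one_le_of_queenQuartic_eq_zero :
    ‖z * t ^ 2 - 1‖ ≤ ‖t‖ + 2 * √‖t‖ * (3 * ‖t‖ + 2) := by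
  have hsq : (z * t ^ 2 - t - 1) ^ 2 = 4 * t * (3 * t - 2) ^ 2 := by
    rw [queenQuartic_eq_sq_sub] at h; linear_combination h
  have hfactor : ‖3 * t - 2‖ ≤ 3 * ‖t‖ + 2 := by
    simpa using norm_sub_le (3 * t) 2
  have hnorm : ‖z * t ^ 2 - t - 1‖ ≤ 2 * √‖t‖ * (3 * ‖t‖ + 2) := by
    rw [← pow_le_pow_iff_left₀ (norm_nonneg _) (by positivity) two_ne_zero, ← norm_pow, hsq,
      mul_pow, mul_pow, Real.sq_sqrt (norm_nonneg _)]
    simp only [norm_mul, norm_pow, Complex.norm_ofNat]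
    gcongr
    norm_num
  calc ‖z * t ^ 2 - 1‖ = ‖t + (z * t ^ 2 - t - 1)‖ := by ring_nf
    _ ≤ ‖t‖ + 2 * √‖t‖ * (3 * ‖t‖ + 2) := (norm_add_le _ _).trans (by gcongr)

theorem norm_mul_norm_sq_le_of_queenQuartic_eq_zero (hz : 12 < ‖z‖) :
    ‖z‖ * ‖t‖ ^ 2 ≤ 12 := by
  obtain ⟨s, hs, hts⟩ : ∃ s, 0 ≤ s ∧ ‖t‖ = s ^ 2 :=
    ⟨√‖t‖, Real.sqrt_nonneg _, (Real.sq_sqrt (norm_nonneg _)).symm⟩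
  have hbound : ‖z‖ * s ^ 4 ≤ 1 + 4 * s + s ^ 2 + 6 * s ^ 3 := by
    have := (norm_sub_norm_le _ _).trans
      (norm_mul_sq_sub_one_le_of_queenQuartic_eq_zero h)
    rw [norm_mul, norm_pow, norm_one, hts, Real.sqrt_sq hs] at this
    nlinarith
  rw [hts]
  rcases le_or_gt s 1 with hs1 | hs1
  · nlinarith [pow_le_one₀ hs hs1 (n := 3), pow_le_one₀ hs hs1 (n := 2)]
  · have : 1 + 4 * s + s ^ 2 + 6 * s ^ 3 < 12 * s ^ 4 := by
      nlinarith [pow_lt_pow_right₀ hs1 (show 3 < 4 by norm_num),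
        pow_lt_pow_right₀ hs1 (show 2 < 4 by norm_num),
        pow_lt_pow_right₀ hs1 (show 1 < 4 by norm_num)]
    nlinarith [pow_pos (zero_lt_one.trans hs1) 4]

end Root

theorem tendsto_norm_of_queenQuartic_eq_zero {α : Type*} {l : Filter α} {z t : α → ℂ}
    (hz : Tendsto (fun a ↦ ‖z a‖) l atTop) (h : ∀ᶠ a in l, queenQuartic (t a) (z a) = 0) :
    Tendsto (fun a ↦ ‖t a‖) l (𝓝 0) := by
  have hbound : ∀ᶠ a in l, ‖t a‖ ≤ √(12 / ‖z a‖) := by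
    filter_upwards [h, hz.eventually_gt_atTop 12] with a ha hza
    rw [Real.le_sqrt (norm_nonneg _) (by positivity), le_div_iff₀ (by linarith), mul_comm]
    exact norm_mul_norm_sq_le_of_queenQuartic_eq_zero ha hza
  have hlim : Tendsto (fun a ↦ √(12 / ‖z a‖)) l (𝓝 0) := by
    simpa using (tendsto_const_nhds.div_atTop hz).sqrt
  exact squeeze_zero' (.of_forall fun _ ↦ norm_nonneg _) hbound hlim

theorem tendsto_mul_sq_of_queenQuartic_eq_zero {α : Type*} {l : Filter α} {z t : α → ℂ}
    (hz : Tendsto (fun a ↦ ‖z a‖) l atTop) (h : ∀ᶠ a in l, queenQuartic (t a) (z a) = 0) :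
    Tendsto (fun a ↦ z a * t a ^ 2) l (𝓝 1) := by
  rw [tendsto_iff_norm_sub_tendsto_zero]
  have hlim : Tendsto (fun a ↦ ‖t a‖ + 2 * √‖t a‖ * (3 * ‖t a‖ + 2)) l (𝓝 0) := by
    have hcont : Continuous fun r : ℝ ↦ r + 2 * √r * (3 * r + 2) := by fun_prop
    simpa [Function.comp_def] using
      (hcont.tendsto 0).comp (tendsto_norm_of_queenQuartic_eq_zero hz h)
  exact squeeze_zero' (.of_forall fun _ ↦ norm_nonneg _)
    (h.mono fun _ ↦ norm_mul_sq_sub_one_le_of_queenQuartic_eq_zero) hlim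

theorem queen_root_asymptotics_general (t₁ : ℝ → ℂ)
    (hroot : ∀ z : ℝ, z < -9/4 →
      (z : ℂ) ^ 2 * (t₁ z) ^ 4 + (-2 * z - 36) * (t₁ z) ^ 3
        + (49 - 2 * z) * (t₁ z) ^ 2 - 14 * (t₁ z) + 1 = 0) :
    Tendsto (fun z : ℝ => (z : ℂ) * (t₁ z) ^ 2) atBot (nhds 1) := by
  refine tendsto_mul_sq_of_queenQuartic_eq_zero ?_ ((eventually_lt_atBot _).mono hroot)
  simpa only [Complex.norm_real, Real.norm_eq_abs] using tendsto_abs_atBot_atTop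

/-- Let `t₁ z` denote, for each real `z < -9/4`, the root of
`D(t,z) = z²t⁴ + (-2z-36)t³ + (49-2z)t² - 14t + 1` in the upper half-plane of
smallest modulus. Then `z * (t₁ z)² → 1` as `z → -∞`. -/
theorem queen_root_asymptotics (t₁ : ℝ → ℂ)
    (hroot : ∀ z : ℝ, z < -9/4 →
      (z : ℂ) ^ 2 * (t₁ z) ^ 4 + (-2 * z - 36) * (t₁ z) ^ 3
        + (49 - 2 * z) * (t₁ z) ^ 2 - 14 * (t₁ z) + 1 = 0)
    (hupper : ∀ z : ℝ, z < -9/4 → 0 < (t₁ z).im)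
    (hmin : ∀ z : ℝ, z < -9/4 → ∀ t : ℂ,
      (z : ℂ) ^ 2 * t ^ 4 + (-2 * z - 36) * t ^ 3 + (49 - 2 * z) * t ^ 2 - 14 * t + 1 = 0 →
      0 < t.im → ‖t₁ z‖ ≤ ‖t‖) :
    Tendsto (fun z : ℝ => (z : ℂ) * (t₁ z) ^ 2) atBot (nhds 1) :=
  queen_root_asymptotics_general t₁ hroot
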